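/- arXiv:2605.28429 — 8 statements merged into one kernel-verified Lean document; each statement's English description precedes it below -/
import Mathlib

section
/- Let (Ω, F, P) be an atomless probability space, let α ∈ (0,1) and let ℓ ∈ [0,∞] (in the extended nonnegative reals). Then the following are equivalent: (i) for every measurable set A ⊆ Ω, one has ℓ · P(A) ≤ 1 if and only if P(A) ≤ α; (ii) ℓ = 1/α. -/
/-!
An atomless probability measure takes every value in `[0, 1]` (Sierpiński), so condition (i)
is really a statement about all numbers `p ∈ [0, 1]`: `ℓ * p ≤ 1 ↔ p ≤ α`. Testing `p = α`
gives `ℓ ≤ 1/α`, and if `ℓ < 1/α` then `p = min (1/ℓ) 1` is a value above `α` with `ℓ * p ≤ 1`.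

Sierpiński's theorem is proved greedily: starting from `∅`, repeatedly add a piece whose measure
is at least half the supremum of the increments that keep the total at most `t`. The increments are
disjoint, hence summable, so no set of positive measure can be added to the union within the
budget; atomlessness supplies such a set unless the union already has measure `t`.
-/

open MeasureTheory ENNReal Set

/-- A measure is atomless if every measurable set of positive measure has a
measurable subset of strictly intermediate positive measure. -/
def Atomless {Ω : Type*} [MeasurableSpace Ω] (P : Measure Ω) : Prop :=
  ∀ A : Set Ω, MeasurableSet A → P A ≠ 0 →
    ∃ B : Set Ω, B ⊆ A ∧ MeasurableSet B ∧ 0 < P B ∧ P B < P A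

section

variable {Ω : Type*} [MeasurableSpace Ω] {μ : Measure Ω} [IsFiniteMeasure μ]

namespace MeasureTheory

theorem exists_almost_maximal_extension {A : Set Ω} (hA : MeasurableSet A) {t : ℝ≥0∞}
    (hAt : μ A ≤ t) :
    ∃ B, MeasurableSet B ∧ A ⊆ B ∧ μ B ≤ t ∧
      ∀ D, MeasurableSet D → A ⊆ D → μ D ≤ t → μ (D \ A) ≤ 2 * μ (B \ A) := by
  set 𝒟 : Set (Set Ω) := {D | MeasurableSet D ∧ A ⊆ D ∧ μ D ≤ t}
  set s := ⨆ D ∈ 𝒟, μ (D \ A)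
  have hle : ∀ D, MeasurableSet D → A ⊆ D → μ D ≤ t → μ (D \ A) ≤ s :=
    fun D hD hAD hDt => le_biSup (fun D => μ (D \ A)) (show D ∈ 𝒟 from ⟨hD, hAD, hDt⟩)
  rcases eq_or_ne s 0 with hs | hs
  · refine ⟨A, hA, subset_rfl, hAt, fun D hD hAD hDt => ?_⟩
    exact (hle D hD hAD hDt).trans (hs ▸ zero_le)
  have hs_top : s ≠ ∞ :=
    ne_top_of_le_ne_top (measure_ne_top μ univ) <|
      iSup₂_le fun D _ => measure_mono (subset_univ _)
  obtain ⟨B, ⟨hB, hAB, hBt⟩, hBs⟩ := lt_biSup_iff.1 (ENNReal.half_lt_self hs hs_top)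
  refine ⟨B, hB, hAB, hBt, fun D hD hAD hDt => (hle D hD hAD hDt).trans ?_⟩
  calc s = 2 * (s / 2) := (ENNReal.mul_div_cancel two_ne_zero ofNat_ne_top).symm
    _ ≤ 2 * μ (B \ A) := by gcongr

theorem exists_maximal_measurableSet_measure_le (t : ℝ≥0∞) :
    ∃ A, MeasurableSet A ∧ μ A ≤ t ∧
      ∀ C, MeasurableSet C → Disjoint A C → μ A + μ C ≤ t → μ C = 0 := by
  choose! g hg using fun A (h : MeasurableSet A ∧ μ A ≤ t) =>
    exists_almost_maximal_extension (μ := μ) h.1 h.2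
  set S : ℕ → Set Ω := fun n => g^[n] ∅
  have hS_succ : ∀ n, S (n + 1) = g (S n) := fun n => Function.iterate_succ_apply' g n ∅
  have hS : ∀ n, MeasurableSet (S n) ∧ μ (S n) ≤ t := by
    intro n
    induction n with
    | zero => exact ⟨MeasurableSet.empty, by simp [S]⟩
    | succ n ih => rw [hS_succ]; exact ⟨(hg _ ih).1, (hg _ ih).2.2.1⟩
  have hmono : Monotone S :=
    monotone_nat_of_le_succ fun n => (hS_succ n).symm ▸ (hg _ (hS n)).2.1
  refine ⟨⋃ n, S n, .iUnion fun n => (hS n).1, ?_, fun C hC hdisj hCt => ?_⟩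
  · rw [hmono.measure_iUnion]
    exact iSup_le fun n => (hS n).2
  have hstep : ∀ n, μ C ≤ 2 * μ (disjointed S (n + 1)) := by
    intro n
    have hDt : μ (S n ∪ C) ≤ t := (measure_union_le _ _).trans <|
      le_trans (by gcongr; exact subset_iUnion S n) hCt
    have hCn : Disjoint C (S n) := (hdisj.mono_left (subset_iUnion S n)).symm
    have := (hg _ (hS n)).2.2.2 _ ((hS n).1.union hC) subset_union_left hDt
    rwa [union_sdiff_left, sdiff_eq_left.2 hCn, ← hS_succ, ← hmono.disjointed_add_one] at this
  have hsum : ∑' n, μ (disjointed S (n + 1)) ≠ ∞ := by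
    refine ne_top_of_le_ne_top (measure_ne_top μ (⋃ n, S n)) ?_
    calc ∑' n, μ (disjointed S (n + 1)) ≤ ∑' n, μ (disjointed S n) :=
          ENNReal.tsum_comp_le_tsum_of_injective (add_left_injective 1) _
      _ = μ (⋃ n, S n) := by
          rw [← measure_iUnion (disjoint_disjointed S) (.disjointed fun n => (hS n).1),
            iUnion_disjointed]
  by_contra hC0
  have hle : ∑' _ : ℕ, μ C ≤ 2 * ∑' n, μ (disjointed S (n + 1)) :=
    ENNReal.tsum_mul_left ▸ ENNReal.tsum_le_tsum hstep
  rw [ENNReal.tsum_const_eq_top_of_ne_zero hC0, top_le_iff] at hle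
  exact ENNReal.mul_ne_top ofNat_ne_top hsum hle

end MeasureTheory

namespace Atomless

theorem exists_subset_measure_le_half (hμ : Atomless μ) {A : Set Ω} (hA : MeasurableSet A)
    (h0 : μ A ≠ 0) : ∃ B ⊆ A, MeasurableSet B ∧ 0 < μ B ∧ μ B ≤ μ A / 2 := by
  obtain ⟨B, hBA, hB, hB0, hBA'⟩ := hμ A hA h0
  rcases le_total (μ B) (μ A / 2) with h | h
  · exact ⟨B, hBA, hB, hB0, h⟩
  have hdiff : μ (A \ B) = μ A - μ B :=
    measure_sdiff hBA hB.nullMeasurableSet (measure_ne_top μ B)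
  refine ⟨A \ B, sdiff_subset, hA.diff hB, hdiff ▸ tsub_pos_of_lt hBA', ?_⟩
  rw [hdiff, tsub_le_iff_right]
  calc μ A = μ A / 2 + μ A / 2 := (ENNReal.add_halves _).symm
    _ ≤ μ A / 2 + μ B := by gcongr

theorem exists_subset_measure_pos_le (hμ : Atomless μ) {A : Set Ω} (hA : MeasurableSet A)
    (h0 : μ A ≠ 0) {ε : ℝ≥0∞} (hε : ε ≠ 0) : ∃ B ⊆ A, MeasurableSet B ∧ 0 < μ B ∧ μ B ≤ ε := by
  have halve : ∀ n : ℕ, ∃ B ⊆ A, MeasurableSet B ∧ 0 < μ B ∧ μ B ≤ μ A * 2⁻¹ ^ n := by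
    intro n
    induction n with
    | zero => exact ⟨A, subset_rfl, hA, pos_iff_ne_zero.2 h0, by simp⟩
    | succ n ih =>
      obtain ⟨B, hBA, hB, hB0, hBn⟩ := ih
      obtain ⟨C, hCB, hC, hC0, hCB'⟩ := hμ.exists_subset_measure_le_half hB hB0.ne'
      refine ⟨C, hCB.trans hBA, hC, hC0, hCB'.trans ?_⟩
      rw [pow_succ, ← mul_assoc, ← div_eq_mul_inv]
      gcongr
  obtain ⟨n, hn⟩ :=
    ENNReal.exists_inv_two_pow_lt (ENNReal.div_pos hε (measure_ne_top μ A)).ne'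
  obtain ⟨B, hBA, hB, hB0, hBn⟩ := halve n
  exact ⟨B, hBA, hB, hB0, hBn.trans (mul_le_of_le_div' hn.le)⟩

theorem exists_measure_eq (hμ : Atomless μ) {t : ℝ≥0∞} (ht : t ≤ μ univ) :
    ∃ A, MeasurableSet A ∧ μ A = t := by
  obtain ⟨A, hA, hAt, hmax⟩ := exists_maximal_measurableSet_measure_le (μ := μ) t
  refine ⟨A, hA, hAt.antisymm (not_lt.1 fun hlt => ?_)⟩
  have hAc : μ Aᶜ ≠ 0 := by
    rw [measure_compl hA (measure_ne_top μ A)]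
    exact (tsub_pos_of_lt (hlt.trans_le ht)).ne'
  obtain ⟨C, hCA, hC, hC0, hCt⟩ :=
    hμ.exists_subset_measure_pos_le hA.compl hAc (tsub_pos_of_lt hlt).ne'
  exact hC0.ne' <| hmax C hC (disjoint_compl_right.mono_right hCA)
    (add_le_of_le_tsub_left_of_le hAt hCt)

theorem forall_measurableSet_iff (hμ : Atomless μ) {q : ℝ≥0∞ → Prop} :
    (∀ A, MeasurableSet A → q (μ A)) ↔ ∀ p ≤ μ univ, q p := by
  refine ⟨fun h p hp => ?_, fun h A _ => h _ (measure_mono (subset_univ A))⟩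
  obtain ⟨A, hA, rfl⟩ := hμ.exists_measure_eq hp
  exact h A hA

end Atomless

end

theorem ENNReal.forall_le_one_mul_le_one_iff_le_iff_eq_inv {a ℓ : ℝ≥0∞} (ha : a < 1) :
    (∀ p ≤ 1, (ℓ * p ≤ 1 ↔ p ≤ a)) ↔ ℓ = a⁻¹ := by
  refine ⟨fun h => le_antisymm (le_inv_iff_mul_le.2 ((h a ha.le).2 le_rfl)) ?_, ?_⟩
  · by_contra! hlt
    have hp : a < min ℓ⁻¹ 1 := lt_min (lt_inv_iff_lt_inv.1 hlt) ha
    have hℓp : ℓ * min ℓ⁻¹ 1 ≤ 1 :=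
      (mul_le_mul_right (min_le_left _ _) ℓ).trans (ENNReal.mul_inv_le_one ℓ)
    exact hp.not_ge ((h _ (min_le_right _ _)).1 hℓp)
  · rintro rfl p -
    rw [mul_comm, ← le_inv_iff_mul_le, inv_inv]

/-- Theorem 1 (numeric form): an expected-loss notion of validity with loss value `ℓ`
nests classical validity at level `α` if and only if `ℓ = 1/α`. -/
theorem stmt_0 {Ω : Type*} [MeasurableSpace Ω] (P : Measure Ω) [IsProbabilityMeasure P]
    (hP : Atomless P) (α : ℝ) (hα : α ∈ Set.Ioo (0 : ℝ) 1) (ℓ : ℝ≥0∞) :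
    (∀ A : Set Ω, MeasurableSet A → (ℓ * P A ≤ 1 ↔ P A ≤ ENNReal.ofReal α)) ↔
      ℓ = 1 / ENNReal.ofReal α := by
  rw [hP.forall_measurableSet_iff (q := fun x => ℓ * x ≤ 1 ↔ x ≤ ENNReal.ofReal α),
    measure_univ, one_div]
  exact ENNReal.forall_le_one_mul_le_one_iff_le_iff_eq_inv (ENNReal.ofReal_lt_one.2 hα.2)
end

section
/- Let (Ω, F, P) be a probability space, M > 0, and let Ȳ : Ω → ℝ be measurable with 0 ≤ Ȳ ≤ M pointwise and ∫ Ȳ dP < 1. Let U : Ω → ℝ be uniformly distributed on [0,1] and independent of σ(Ȳ). Then there exist a ∈ (0,1) and δ > 0 such that, setting α̃ := a·(1 + δ·Ȳ/M) and A := {U ≤ α̃·Ȳ}, the following hold: (i) a ≤ α̃ ≤ a(1+δ) < 1 pointwise; (ii) α̃·Ȳ ≤ 1 pointwise; (iii) P(A) ≤ a; (iv) the conditional expectation E[(1/α̃)·1_A | σ(Ȳ)] equals Ȳ almost surely. -/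
/-!
Given `Y`, the event `{U ≤ t(Y)}` has conditional probability `t(Y)`: by independence the
conditional distribution of `U` given `Y` is the uniform law itself. For `t(y) = α̃(y) y` the
weight `1 / α̃` is `σ(Y)`-measurable and bounded by `1 / a`, so it pulls out of the conditional
expectation and cancels `α̃`, which is (iv). Integrating gives `P(A) = E[α̃ Y] ≤ a (1 + δ) E[Y]`,
and (iii) follows once `(1 + δ) E[Y] ≤ 1`.
-/

open MeasureTheory ProbabilityTheory

section Replication

variable {Ω β : Type*} [MeasurableSpace Ω] [MeasurableSpace β] {P : Measure Ω}
  [IsFiniteMeasure P]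

lemma condDistrib_ae_eq_const_of_indepFun {γ : Type*} [MeasurableSpace γ]
    [StandardBorelSpace γ] [Nonempty γ] {X : Ω → β} {U : Ω → γ}
    (hX : Measurable X) (hU : Measurable U) (h : IndepFun X U P) :
    condDistrib U X P =ᵐ[P.map X] Kernel.const β (P.map U) := by
  rw [condDistrib_ae_eq_iff_measure_eq_compProd X hU.aemeasurable, Measure.compProd_const]
  exact (indepFun_iff_map_prod_eq_prod_map_map hX.aemeasurable hU.aemeasurable).1 h

lemma condExp_indicator_le_comp_ae_eq_of_indepFun {Y : Ω → β} {U : Ω → ℝ} {t : β → ℝ}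
    (hY : Measurable Y) (hU : Measurable U) (ht : Measurable t) (h : IndepFun Y U P) :
    P[{ω | U ω ≤ t (Y ω)}.indicator (fun _ => (1 : ℝ)) | MeasurableSpace.comap Y inferInstance]
      =ᵐ[P] fun ω => (P.map U).real (Set.Iic (t (Y ω))) := by
  set S : Set (β × ℝ) := {p | p.2 ≤ t p.1}
  have hS : MeasurableSet S := measurableSet_le measurable_snd (ht.comp measurable_fst)
  have hA : MeasurableSet {ω | U ω ≤ t (Y ω)} := measurableSet_le hU (ht.comp hY)
  have hcomp : {ω | U ω ≤ t (Y ω)}.indicator (fun _ => (1 : ℝ))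
      = fun ω => S.indicator (fun _ => (1 : ℝ)) (Y ω, U ω) := rfl
  filter_upwards [condExp_prod_ae_eq_integral_condDistrib hY hU.aemeasurable
      (measurable_const.indicator hS).stronglyMeasurable
      (hcomp ▸ (integrable_const 1).indicator hA),
    ae_of_ae_map hY.aemeasurable (condDistrib_ae_eq_const_of_indepFun hY hU h)] with ω h1 h2
  rw [hcomp, h1, h2, Kernel.const_apply]
  exact integral_indicator_one (s := Set.Iic (t (Y ω))) measurableSet_Iic

lemma measureReal_uniform_Iic {x : ℝ} (hx : x ∈ Set.Icc (0 : ℝ) 1) :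
    (volume.restrict (Set.Icc (0 : ℝ) 1)).real (Set.Iic x) = x := by
  have hinter : Set.Iic x ∩ Set.Icc 0 1 = Set.Icc 0 x := by
    ext u
    simp only [Set.mem_inter_iff, Set.mem_Iic, Set.mem_Icc]
    grind
  rw [measureReal_restrict_apply measurableSet_Iic, hinter, Real.volume_real_Icc_of_le hx.1,
    sub_zero]

lemma condExp_indicator_le_comp_ae_eq_of_uniform {Y : Ω → β} {U : Ω → ℝ} {t : β → ℝ}
    (hY : Measurable Y) (hU : Measurable U) (ht : Measurable t)
    (hUlaw : P.map U = volume.restrict (Set.Icc (0 : ℝ) 1)) (h : IndepFun Y U P)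
    (ht01 : ∀ ω, t (Y ω) ∈ Set.Icc (0 : ℝ) 1) :
    P[{ω | U ω ≤ t (Y ω)}.indicator (fun _ => (1 : ℝ)) | MeasurableSpace.comap Y inferInstance]
      =ᵐ[P] fun ω => t (Y ω) := by
  filter_upwards [condExp_indicator_le_comp_ae_eq_of_indepFun hY hU ht h] with ω hω
  rw [hω, hUlaw, measureReal_uniform_Iic (ht01 ω)]

lemma measureReal_le_comp_eq_integral_of_uniform {Y : Ω → β} {U : Ω → ℝ} {t : β → ℝ}
    (hY : Measurable Y) (hU : Measurable U) (ht : Measurable t)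
    (hUlaw : P.map U = volume.restrict (Set.Icc (0 : ℝ) 1)) (h : IndepFun Y U P)
    (ht01 : ∀ ω, t (Y ω) ∈ Set.Icc (0 : ℝ) 1) :
    P.real {ω | U ω ≤ t (Y ω)} = ∫ ω, t (Y ω) ∂P := by
  rw [← integral_condExp_indicator hY (A := {ω | U ω ≤ t (Y ω)}) (measurableSet_le hU (ht.comp hY)),
    integral_congr_ae (condExp_indicator_le_comp_ae_eq_of_uniform hY hU ht hUlaw h ht01)]

lemma condExp_inv_mul_indicator_le_mul_ae_eq {Y U : Ω → ℝ} {c : ℝ → ℝ} {a : ℝ}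
    (hY : Measurable Y) (hU : Measurable U) (hc : Measurable c)
    (hUlaw : P.map U = volume.restrict (Set.Icc (0 : ℝ) 1)) (h : IndepFun Y U P)
    (ha : 0 < a) (hca : ∀ ω, a ≤ c (Y ω)) (hcY : ∀ ω, c (Y ω) * Y ω ∈ Set.Icc (0 : ℝ) 1) :
    P[fun ω => (c (Y ω))⁻¹ * {ω | U ω ≤ c (Y ω) * Y ω}.indicator (fun _ => (1 : ℝ)) ω
      | MeasurableSpace.comap Y inferInstance] =ᵐ[P] Y := by
  have hinv : StronglyMeasurable[MeasurableSpace.comap Y inferInstance] fun ω => (c (Y ω))⁻¹ :=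
    (hc.inv.comp (comap_measurable Y)).stronglyMeasurable
  have hA : MeasurableSet {ω | U ω ≤ c (Y ω) * Y ω} :=
    measurableSet_le hU ((hc.comp hY).mul hY)
  have hbound : ∀ᵐ ω ∂P, ‖(c (Y ω))⁻¹‖ ≤ a⁻¹ := ae_of_all _ fun ω => by
    rw [norm_inv, Real.norm_of_nonneg (ha.le.trans (hca ω))]
    exact inv_anti₀ ha (hca ω)
  refine (condExp_stronglyMeasurable_mul_of_bound hY.comap_le hinv
    ((integrable_const 1).indicator hA) a⁻¹ hbound).trans ?_
  filter_upwards [condExp_indicator_le_comp_ae_eq_of_uniform (t := fun y => c y * y) hY hU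
    (hc.mul measurable_id) hUlaw h hcY] with ω hω
  rw [Pi.mul_apply, hω, inv_mul_cancel_left₀ (ha.trans_le (hca ω)).ne']

end Replication

-- `δ = 1 - e` gives `(1 + δ) e = 1 - (1 - e)² ≤ 1`; `a` normalises `a (1 + δ)` to `1 / (M + 1)`.
lemma exists_level_constants {e M : ℝ} (he : e < 1) (hM : 0 < M) :
    ∃ a ∈ Set.Ioo (0 : ℝ) 1, ∃ δ > (0 : ℝ),
      a * (1 + δ) < 1 ∧ a * (1 + δ) * M ≤ 1 ∧ (1 + δ) * e ≤ 1 := by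
  set δ := 1 - e
  set a := ((1 + δ) * (M + 1))⁻¹
  have hδ : 0 < δ := sub_pos.2 he
  have ha : 0 < a := by positivity
  have haδ : a * (1 + δ) = (M + 1)⁻¹ := by simp only [a]; field_simp
  have haδ_lt : a * (1 + δ) < 1 := haδ ▸ inv_lt_one_of_one_lt₀ (by linarith)
  refine ⟨a, ⟨ha, (lt_mul_of_one_lt_right ha (by linarith)).trans haδ_lt⟩, δ, hδ, haδ_lt, ?_,
    by nlinarith [sq_nonneg (1 - e)]⟩
  rw [haδ, inv_mul_le_iff₀ (by linarith)]
  linarith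

lemma mul_one_add_mul_div_mem_Icc {a δ M y : ℝ} (ha : 0 ≤ a) (hδ : 0 ≤ δ) (hM : 0 < M)
    (hy : y ∈ Set.Icc 0 M) : a * (1 + δ * y / M) ∈ Set.Icc a (a * (1 + δ)) := by
  have hfrac : δ * y / M ∈ Set.Icc 0 δ :=
    ⟨div_nonneg (mul_nonneg hδ hy.1) hM.le,
      div_le_of_le_mul₀ hM.le hδ (mul_le_mul_of_nonneg_left hy.2 hδ)⟩
  constructor <;> nlinarith [hfrac.1, hfrac.2]

lemma mul_one_add_mul_div_mul_mem_Icc {a δ M y : ℝ} (ha : 0 ≤ a) (hδ : 0 ≤ δ) (hM : 0 < M)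
    (hy : y ∈ Set.Icc 0 M) : a * (1 + δ * y / M) * y ∈ Set.Icc 0 (a * (1 + δ) * M) := by
  have hlevel := mul_one_add_mul_div_mem_Icc ha hδ hM hy
  exact ⟨mul_nonneg (ha.trans hlevel.1) hy.1,
    mul_le_mul hlevel.2 hy.2 hy.1 (by positivity)⟩

/-- Part 1 of the replication lemma (Lemma 1): a bounded nonnegative random variable `Y`
with expectation strictly below 1 can be replicated as the conditional expected loss of a
test at a data-dependent level `α̃ = a(1 + δY/M) ≥ a`, in a way that is classically valid
at the fixed level `a`. -/
theorem stmt_3 {Ω : Type*} [MeasurableSpace Ω] (P : Measure Ω) [IsProbabilityMeasure P]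
    (M : ℝ) (hM : 0 < M)
    (Y : Ω → ℝ) (hYmeas : Measurable Y) (hY0 : ∀ ω, 0 ≤ Y ω) (hYM : ∀ ω, Y ω ≤ M)
    (hYint : ∫ ω, Y ω ∂P < 1)
    (U : Ω → ℝ) (hU : Measurable U)
    (hUlaw : P.map U = volume.restrict (Set.Icc (0 : ℝ) 1))
    (hindep : Indep (MeasurableSpace.comap U inferInstance)
      (MeasurableSpace.comap Y inferInstance) P) :
    ∃ a ∈ Set.Ioo (0 : ℝ) 1, ∃ δ > (0 : ℝ),
      -- (i) `a ≤ α̃ ≤ a(1+δ) < 1` pointwise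
      (∀ ω, a ≤ a * (1 + δ * Y ω / M) ∧ a * (1 + δ * Y ω / M) ≤ a * (1 + δ)) ∧
      a * (1 + δ) < 1 ∧
      -- (ii) `α̃ · Y ≤ 1` pointwise
      (∀ ω, a * (1 + δ * Y ω / M) * Y ω ≤ 1) ∧
      -- (iii) `P(A) ≤ a` where `A = {U ≤ α̃ Y}`
      P {ω | U ω ≤ a * (1 + δ * Y ω / M) * Y ω} ≤ ENNReal.ofReal a ∧
      -- (iv) `E[(1/α̃)·1_A | σ(Y)] = Y` a.s.
      P[fun ω => (a * (1 + δ * Y ω / M))⁻¹ *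
            ({ω' | U ω' ≤ a * (1 + δ * Y ω' / M) * Y ω'}).indicator (fun _ => (1 : ℝ)) ω
          | MeasurableSpace.comap Y inferInstance] =ᵐ[P] Y := by
  have hYU : IndepFun Y U P := ((IndepFun_iff_Indep U Y P).2 hindep).symm
  have hYmem : ∀ ω, Y ω ∈ Set.Icc 0 M := fun ω => ⟨hY0 ω, hYM ω⟩
  obtain ⟨a, ⟨ha, ha1⟩, δ, hδ, haδ, haδM, hδe⟩ := exists_level_constants hYint hM
  set c : ℝ → ℝ := fun y => a * (1 + δ * y / M)
  have hc : Measurable c := by fun_prop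
  have hlevel : ∀ ω, c (Y ω) ∈ Set.Icc a (a * (1 + δ)) := fun ω =>
    mul_one_add_mul_div_mem_Icc ha.le hδ.le hM (hYmem ω)
  have hcY : ∀ ω, c (Y ω) * Y ω ∈ Set.Icc (0 : ℝ) 1 := fun ω =>
    Set.Icc_subset_Icc le_rfl haδM (mul_one_add_mul_div_mul_mem_Icc ha.le hδ.le hM (hYmem ω))
  have hYint' : Integrable Y P := Integrable.of_bound hYmeas.aestronglyMeasurable M
    (ae_of_all _ fun ω => by rw [Real.norm_of_nonneg (hY0 ω)]; exact hYM ω)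
  have hPA : P.real {ω | U ω ≤ c (Y ω) * Y ω} ≤ a :=
    calc P.real {ω | U ω ≤ c (Y ω) * Y ω} = ∫ ω, c (Y ω) * Y ω ∂P :=
          measureReal_le_comp_eq_integral_of_uniform (t := fun y => c y * y) hYmeas hU
            (hc.mul measurable_id) hUlaw hYU hcY
      _ ≤ ∫ ω, a * (1 + δ) * Y ω ∂P := integral_mono_of_nonneg (ae_of_all _ fun ω => (hcY ω).1)
          (hYint'.const_mul _) (ae_of_all _ fun ω =>
            mul_le_mul_of_nonneg_right (hlevel ω).2 (hY0 ω))
      _ = a * ((1 + δ) * ∫ ω, Y ω ∂P) := by rw [integral_const_mul, mul_assoc]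
      _ ≤ a := mul_le_of_le_one_right ha.le hδe
  exact ⟨a, ⟨ha, ha1⟩, δ, hδ, hlevel, haδ, fun ω => (hcY ω).2,
    (ENNReal.le_ofReal_iff_toReal_le (measure_ne_top _ _) ha.le).2 hPA,
    condExp_inv_mul_indicator_le_mul_ae_eq hYmeas hU hc hUlaw hYU ha (fun ω => (hlevel ω).1) hcY⟩
end

section
/- Let (Ω, F, P) be a probability space, M > 0, and let Ȳ : Ω → ℝ be measurable with 0 ≤ Ȳ ≤ M pointwise and ∫ Ȳ dP > 1. Let U : Ω → ℝ be uniformly distributed on [0,1] and independent of σ(Ȳ). Then there exist a ∈ (0,1) and δ ∈ (0,1) such that, setting α̃ := a·(1 − δ·Ȳ/M) and A := {U ≤ α̃·Ȳ}, the following hold: (i) 0 < a(1−δ) ≤ α̃ ≤ a pointwise; (ii) α̃·Ȳ ≤ 1 pointwise; (iii) P(A) > a; (iv) the conditional expectation E[(1/α̃)·1_A | σ(Ȳ)] equals Ȳ almost surely. -/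
open MeasureTheory ProbabilityTheory

/-!
Take `a = (M + 2)⁻¹`, so that `α̃ Y ≤ a M ≤ 1`, and `δ` so small that `(1 - δ) E[Y] > 1`.
Since `U` is uniform and independent of `Y`, the regular conditional law of `U` given `Y` is
the uniform law, so conditioning on `Y` freezes the threshold: for any `[0,1]`-valued `g`,
`P(U ≤ g(Y) | Y) = g(Y)`. With `g = α̃ Y` this gives `E[α̃⁻¹ 1_A | Y] = α̃⁻¹ α̃ Y = Y` and
`P(A) = E[α̃ Y] ≥ a (1 - δ) E[Y] > a`.
-/

section Independent

variable {Ω β γ : Type*} [MeasurableSpace Ω] {mβ : MeasurableSpace β} [MeasurableSpace γ]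
  [StandardBorelSpace γ] [Nonempty γ] {μ : Measure Ω} [IsFiniteMeasure μ]
  {X : Ω → β} {Y : Ω → γ}

theorem condDistrib_ae_eq_const_of_indepFun_s4 (hX : Measurable X) (hY : Measurable Y)
    (hXY : IndepFun X Y μ) : condDistrib Y X μ =ᵐ[μ.map X] Kernel.const β (μ.map Y) := by
  rw [condDistrib_ae_eq_iff_measure_eq_compProd X hY.aemeasurable, Measure.compProd_const]
  exact (indepFun_iff_map_prod_eq_prod_map_map hX.aemeasurable hY.aemeasurable).mp hXY

theorem condExp_comp_prodMk_ae_eq_integral_of_indepFun (hX : Measurable X) (hY : Measurable Y)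
    (hXY : IndepFun X Y μ) {f : β × γ → ℝ} (hf : StronglyMeasurable f)
    (hf_int : Integrable (fun ω => f (X ω, Y ω)) μ) :
    μ[fun ω => f (X ω, Y ω) | mβ.comap X] =ᵐ[μ] fun ω => ∫ y, f (X ω, y) ∂(μ.map Y) := by
  filter_upwards [condExp_prod_ae_eq_integral_condDistrib hX hY.aemeasurable hf hf_int,
    ae_of_ae_map hX.aemeasurable (condDistrib_ae_eq_const_of_indepFun_s4 hX hY hXY)] with ω h hκ
  rw [h, hκ, Kernel.const_apply]

end Independent

theorem integral_indicator_Iic_uniform {t : ℝ} (ht0 : 0 ≤ t) (ht1 : t ≤ 1) :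
    ∫ u, (Set.Iic t).indicator (fun _ => (1 : ℝ)) u ∂(volume.restrict (Set.Icc (0 : ℝ) 1))
      = t := by
  have hIcc : Set.Iic t ∩ Set.Icc 0 1 = Set.Icc 0 t := by
    ext u; simp only [Set.mem_inter_iff, Set.mem_Iic, Set.mem_Icc]; grind
  refine (integral_indicator_one measurableSet_Iic).trans ?_
  rw [measureReal_restrict_apply measurableSet_Iic, hIcc, Real.volume_real_Icc_of_le ht0, sub_zero]

section UniformThreshold

variable {Ω β : Type*} [MeasurableSpace Ω] {mβ : MeasurableSpace β} {P : Measure Ω}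
  [IsFiniteMeasure P] {Y : Ω → β} {U : Ω → ℝ} {g : β → ℝ}

theorem condExp_mul_indicator_uniform_le_ae_eq (hY : Measurable Y) (hU : Measurable U)
    (hUlaw : P.map U = volume.restrict (Set.Icc 0 1)) (hYU : IndepFun Y U P)
    (hg : Measurable g) (hg01 : ∀ ω, g (Y ω) ∈ Set.Icc 0 1)
    {w : β → ℝ} (hw : Measurable w) (C : ℝ) (hwC : ∀ ω, |w (Y ω)| ≤ C) :
    P[fun ω => w (Y ω) * {ω | U ω ≤ g (Y ω)}.indicator (fun _ => (1 : ℝ)) ω | mβ.comap Y]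
      =ᵐ[P] fun ω => w (Y ω) * g (Y ω) := by
  let f : β × ℝ → ℝ := fun p => w p.1 * (Set.Iic (g p.1)).indicator (fun _ => 1) p.2
  have hf : Measurable f :=
    (hw.comp measurable_fst).mul (measurable_const.indicator
      (measurableSet_le measurable_snd (hg.comp measurable_fst)))
  have hf_int : Integrable (fun ω => f (Y ω, U ω)) P := by
    refine .of_bound (hf.comp (hY.prodMk hU)).aestronglyMeasurable C (.of_forall fun ω => ?_)
    calc ‖f (Y ω, U ω)‖ ≤ C * 1 := by
          rw [norm_mul, Real.norm_eq_abs]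
          exact mul_le_mul (hwC ω) (norm_indicator_le_norm_self _ _ |>.trans (by simp))
            (norm_nonneg _) ((abs_nonneg _).trans (hwC ω))
      _ = C := mul_one C
  filter_upwards [condExp_comp_prodMk_ae_eq_integral_of_indepFun hY hU hYU hf.stronglyMeasurable
    hf_int] with ω hω
  refine hω.trans ?_
  rw [integral_const_mul (w (Y ω)), hUlaw, integral_indicator_Iic_uniform (hg01 ω).1 (hg01 ω).2]

theorem measureReal_uniform_le_eq_integral (hY : Measurable Y) (hU : Measurable U)
    (hUlaw : P.map U = volume.restrict (Set.Icc 0 1)) (hYU : IndepFun Y U P)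
    (hg : Measurable g) (hg01 : ∀ ω, g (Y ω) ∈ Set.Icc 0 1) :
    P.real {ω | U ω ≤ g (Y ω)} = ∫ ω, g (Y ω) ∂P := by
  have h := condExp_mul_indicator_uniform_le_ae_eq hY hU hUlaw hYU hg hg01 measurable_const 1
    (w := fun _ => 1) (fun _ => by simp)
  simp only [one_mul] at h
  rw [← integral_indicator_one (s := {ω | U ω ≤ g (Y ω)}) (measurableSet_le hU (hg.comp hY)),
    ← integral_condExp hY.comap_le]
  exact integral_congr_ae h

end UniformThreshold

section Level

variable {a δ M y : ℝ}

theorem mul_one_sub_le_level (ha : 0 ≤ a) (hδ : 0 ≤ δ) (hM : 0 < M) (hyM : y ≤ M) :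
    a * (1 - δ) ≤ a * (1 - δ * y / M) := by
  have : δ * y / M ≤ δ := by rw [div_le_iff₀ hM]; exact mul_le_mul_of_nonneg_left hyM hδ
  nlinarith

theorem level_le (ha : 0 ≤ a) (hδ : 0 ≤ δ) (hM : 0 ≤ M) (hy : 0 ≤ y) :
    a * (1 - δ * y / M) ≤ a := by
  have : 0 ≤ δ * y / M := by positivity
  nlinarith

theorem level_mul_le_one (ha : 0 ≤ a) (hδ : 0 ≤ δ) (hM : 0 ≤ M) (haM : a * M ≤ 1)
    (hy : 0 ≤ y) (hyM : y ≤ M) : a * (1 - δ * y / M) * y ≤ 1 :=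
  calc a * (1 - δ * y / M) * y ≤ a * M :=
        mul_le_mul (level_le ha hδ hM hy) hyM hy ha
    _ ≤ 1 := haM

end Level

theorem exists_mem_Ioo_one_lt_one_sub_mul {x : ℝ} (hx : 1 < x) :
    ∃ δ ∈ Set.Ioo (0 : ℝ) 1, 1 < (1 - δ) * x := by
  have hx0 : 0 < x⁻¹ := by positivity
  have hx1 : x⁻¹ < 1 := inv_lt_one_of_one_lt₀ hx
  refine ⟨(1 - x⁻¹) / 2, ⟨by linarith, by linarith⟩, ?_⟩
  have : (1 - (1 - x⁻¹) / 2) * x = (x + 1) / 2 := by field_simp; ring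
  rw [this]; linarith

theorem exists_mem_Ioo_mul_le_one {M : ℝ} (hM : 0 ≤ M) :
    ∃ a ∈ Set.Ioo (0 : ℝ) 1, a * M ≤ 1 := by
  refine ⟨(M + 2)⁻¹, ⟨by positivity, inv_lt_one_of_one_lt₀ (by linarith)⟩, ?_⟩
  rw [inv_mul_le_iff₀ (by positivity)]; linarith

/-- Part 2 of the replication lemma (Lemma 1): a bounded nonnegative random variable `Y`
with expectation strictly above 1 can be replicated as the conditional expected loss of a
test at a data-dependent level `α̃ = a(1 − δY/M) ≤ a`, in a way that the rejection
probability exceeds `a`. -/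
theorem stmt_4 {Ω : Type*} [MeasurableSpace Ω] (P : Measure Ω) [IsProbabilityMeasure P]
    (M : ℝ) (hM : 0 < M)
    (Y : Ω → ℝ) (hYmeas : Measurable Y) (hY0 : ∀ ω, 0 ≤ Y ω) (hYM : ∀ ω, Y ω ≤ M)
    (hYint : 1 < ∫ ω, Y ω ∂P)
    (U : Ω → ℝ) (hU : Measurable U)
    (hUlaw : P.map U = volume.restrict (Set.Icc (0 : ℝ) 1))
    (hindep : Indep (MeasurableSpace.comap U inferInstance)
      (MeasurableSpace.comap Y inferInstance) P) :
    ∃ a ∈ Set.Ioo (0 : ℝ) 1, ∃ δ ∈ Set.Ioo (0 : ℝ) 1,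
      -- (i) `0 < a(1−δ) ≤ α̃ ≤ a` pointwise
      0 < a * (1 - δ) ∧
      (∀ ω, a * (1 - δ) ≤ a * (1 - δ * Y ω / M) ∧ a * (1 - δ * Y ω / M) ≤ a) ∧
      -- (ii) `α̃ · Y ≤ 1` pointwise
      (∀ ω, a * (1 - δ * Y ω / M) * Y ω ≤ 1) ∧
      -- (iii) `P(A) > a` where `A = {U ≤ α̃ Y}`
      ENNReal.ofReal a < P {ω | U ω ≤ a * (1 - δ * Y ω / M) * Y ω} ∧
      -- (iv) `E[(1/α̃)·1_A | σ(Y)] = Y` a.s.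
      P[fun ω => (a * (1 - δ * Y ω / M))⁻¹ *
            ({ω' | U ω' ≤ a * (1 - δ * Y ω' / M) * Y ω'}).indicator (fun _ => (1 : ℝ)) ω
          | MeasurableSpace.comap Y inferInstance] =ᵐ[P] Y := by
  obtain ⟨a, ha, haM⟩ := exists_mem_Ioo_mul_le_one hM.le
  obtain ⟨δ, hδ, hδY⟩ := exists_mem_Ioo_one_lt_one_sub_mul hYint
  have hαpos : 0 < a * (1 - δ) := mul_pos ha.1 (by linarith [hδ.2])
  have hlow ω := mul_one_sub_le_level ha.1.le hδ.1.le hM (hYM ω)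
  have hg01 ω : a * (1 - δ * Y ω / M) * Y ω ∈ Set.Icc 0 1 :=
    ⟨mul_nonneg (hαpos.le.trans (hlow ω)) (hY0 ω),
      level_mul_le_one ha.1.le hδ.1.le hM.le haM (hY0 ω) (hYM ω)⟩
  have hg : Measurable fun y => a * (1 - δ * y / M) * y := by fun_prop
  have hYU : IndepFun Y U P := hindep.symm
  refine ⟨a, ha, δ, hδ, hαpos, fun ω => ⟨hlow ω, level_le ha.1.le hδ.1.le hM.le (hY0 ω)⟩,
    fun ω => (hg01 ω).2, ?_, ?_⟩
  · have hgY_int : Integrable (fun ω => a * (1 - δ * Y ω / M) * Y ω) P :=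
      .of_bound (hg.comp hYmeas).aestronglyMeasurable 1
        (.of_forall fun ω => by rw [Real.norm_of_nonneg (hg01 ω).1]; exact (hg01 ω).2)
    rw [ENNReal.ofReal_lt_iff_lt_toReal ha.1.le (measure_ne_top _ _), ← measureReal_def,
      measureReal_uniform_le_eq_integral hYmeas hU hUlaw hYU hg hg01]
    calc a < a * ((1 - δ) * ∫ ω, Y ω ∂P) := lt_mul_right ha.1 hδY
      _ = ∫ ω, a * (1 - δ) * Y ω ∂P := by rw [← mul_assoc, integral_const_mul]
      _ ≤ ∫ ω, a * (1 - δ * Y ω / M) * Y ω ∂P :=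
        integral_mono_of_nonneg (.of_forall fun ω => mul_nonneg hαpos.le (hY0 ω)) hgY_int
          (.of_forall fun ω => mul_le_mul_of_nonneg_right (hlow ω) (hY0 ω))
  · refine (condExp_mul_indicator_uniform_le_ae_eq hYmeas hU hUlaw hYU hg hg01
      (w := fun y => (a * (1 - δ * y / M))⁻¹) (by fun_prop) (a * (1 - δ))⁻¹
      fun ω => ?_).trans (.of_forall fun ω => ?_)
    · rw [abs_of_pos (inv_pos.mpr (hαpos.trans_le (hlow ω)))]
      exact inv_anti₀ hαpos (hlow ω)
    · exact inv_mul_cancel_left₀ (hαpos.trans_le (hlow ω)).ne' (Y ω)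
end

section
/- Let (Ω, F, P) be a probability space and let ρ be a map from measurable functions Ω → [0,∞] to [0,∞] that is continuous from below. Assume: (H1) ρ(f) ≤ 1 for every bounded measurable f : Ω → [0,∞) with ∫ f dP < 1; and (H2) ρ(f) > 1 for every bounded measurable f : Ω → [0,∞) with ∫ f dP > 1. Then for every measurable f : Ω → [0,∞]: ρ(f) ≤ 1 if and only if ∫ f dP ≤ 1 (Lebesgue integral in [0,∞]). -/
open MeasureTheory ENNReal Filter

lemma iSup_min_nat (a : ℝ≥0∞) : ⨆ n : ℕ, min a n = a := by
  refine le_antisymm (iSup_le fun n => min_le_left _ _) ?_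
  by_cases ha : a = ⊤
  · subst ha
    simp only [min_eq_right le_top]
    exact le_of_eq (ENNReal.iSup_natCast).symm
  · obtain ⟨n, hn⟩ := ENNReal.exists_nat_gt ha
    calc a = min a n := (min_eq_left hn.le).symm
    _ ≤ ⨆ n : ℕ, min a n := le_iSup (fun n : ℕ => min a (n : ℝ≥0∞)) n

/-- The core comparison in the proof of Theorem 3: a certainty equivalent `ρ` that is
continuous from below, accepts every bounded function with expectation strictly below 1
(H1), and rejects every bounded function with expectation strictly above 1 (H2), must
agree with the expectation criterion on all nonnegative measurable functions. -/
theorem stmt_5 {Ω : Type*} [MeasurableSpace Ω] (P : Measure Ω) [IsProbabilityMeasure P]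
    (ρ : (Ω → ℝ≥0∞) → ℝ≥0∞)
    (hcont : ∀ f : ℕ → Ω → ℝ≥0∞, (∀ n, Measurable (f n)) → Monotone f →
      ρ (fun ω => ⨆ n, f n ω) = ⨆ n, ρ (f n))
    (H1 : ∀ f : Ω → ℝ≥0∞, Measurable f → (∃ M : ℝ≥0∞, M ≠ ⊤ ∧ ∀ ω, f ω ≤ M) →
      ∫⁻ ω, f ω ∂P < 1 → ρ f ≤ 1)
    (H2 : ∀ f : Ω → ℝ≥0∞, Measurable f → (∃ M : ℝ≥0∞, M ≠ ⊤ ∧ ∀ ω, f ω ≤ M) →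
      1 < ∫⁻ ω, f ω ∂P → 1 < ρ f) :
    ∀ f : Ω → ℝ≥0∞, Measurable f → (ρ f ≤ 1 ↔ ∫⁻ ω, f ω ∂P ≤ 1) := by
  intro f hf
  -- truncations
  set m : ℕ → Ω → ℝ≥0∞ := fun n ω => min (f ω) n with hm
  have hmmeas : ∀ n, Measurable (m n) := fun n => hf.min measurable_const
  have hmmono : Monotone m := fun a b hab ω =>
    min_le_min le_rfl (by exact_mod_cast Nat.cast_le.2 hab)
  have hmsup : ∀ ω, (⨆ n, m n ω) = f ω := fun ω => iSup_min_nat (f ω)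
  constructor
  · -- ρ f ≤ 1 → ∫ f ≤ 1
    intro hρ
    by_contra h
    push_neg at h
    have hint : ∫⁻ ω, f ω ∂P = ⨆ n, ∫⁻ ω, m n ω ∂P := by
      rw [← lintegral_iSup hmmeas hmmono]
      exact lintegral_congr fun ω => (hmsup ω).symm
    rw [hint, lt_iSup_iff] at h
    obtain ⟨n, hn⟩ := h
    have h2 : 1 < ρ (m n) := H2 (m n) (hmmeas n) ⟨n, ENNReal.natCast_ne_top n,
      fun ω => min_le_right _ _⟩ hn
    have hρf : ρ f = ⨆ n, ρ (m n) := by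
      rw [← hcont m hmmeas hmmono]
      congr 1
      exact funext fun ω => (hmsup ω).symm
    exact absurd (le_trans (le_iSup (fun n => ρ (m n)) n) (hρf ▸ hρ)) (not_le.2 h2)
  · -- ∫ f ≤ 1 → ρ f ≤ 1
    intro hint
    set c : ℕ → ℝ≥0∞ := fun n => 1 - (n : ℝ≥0∞)⁻¹ with hc
    have hcmono : Monotone c := fun a b hab =>
      tsub_le_tsub le_rfl (ENNReal.inv_le_inv.2 (by exact_mod_cast Nat.cast_le.2 hab))
    have hclt : ∀ n, c n < 1 := fun n =>
      ENNReal.sub_lt_self one_ne_top one_ne_zero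
        (ENNReal.inv_ne_zero.2 (ENNReal.natCast_ne_top n))
    have hctend : Tendsto c atTop (nhds 1) := by
      have : Tendsto (fun n : ℕ => (1 : ℝ≥0∞) - (n : ℝ≥0∞)⁻¹) atTop (nhds (1 - 0)) :=
        ENNReal.Tendsto.sub tendsto_const_nhds ENNReal.tendsto_inv_nat_nhds_zero
          (Or.inl one_ne_top)
      simpa using this
    set g : ℕ → Ω → ℝ≥0∞ := fun n ω => c n * m n ω with hg
    have hgmeas : ∀ n, Measurable (g n) := fun n => (hmmeas n).const_mul _
    have hgmono : Monotone g := fun a b hab ω => mul_le_mul' (hcmono hab) (hmmono hab ω)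
    have hgsup : ∀ ω, (⨆ n, g n ω) = f ω := by
      intro ω
      refine iSup_eq_of_tendsto (fun a b hab => hgmono hab ω) ?_
      have hmt : Tendsto (fun n => m n ω) atTop (nhds (f ω)) := by
        rw [← hmsup ω]
        exact tendsto_atTop_iSup (fun a b hab => hmmono hab ω)
      have := ENNReal.Tendsto.mul hctend (Or.inl one_ne_zero) hmt (Or.inr one_ne_top)
      simpa using this
    have hρf : ρ f = ⨆ n, ρ (g n) := by
      rw [← hcont g hgmeas hgmono]
      congr 1
      exact funext fun ω => (hgsup ω).symm
    rw [hρf]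
    refine iSup_le fun n => H1 (g n) (hgmeas n) ⟨n, ENNReal.natCast_ne_top n,
      fun ω => le_trans (mul_le_mul' (hclt n).le (min_le_right _ _)) (by simp)⟩ ?_
    have : ∫⁻ ω, g n ω ∂P = c n * ∫⁻ ω, m n ω ∂P :=
      lintegral_const_mul _ (hmmeas n)
    rw [this]
    calc c n * ∫⁻ ω, m n ω ∂P ≤ c n * 1 := by
          refine mul_le_mul' le_rfl (le_trans ?_ hint)
          exact lintegral_mono fun ω => min_le_left _ _
    _ < 1 := by simpa using hclt n
end

section
/- Suppose 'valid' is monotone and continuous from below, and suppose the family of tests φ can be approximated post-hoc. If φ is post-hoc valid, then its closure φ̄ is post-hoc valid. -/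
/-- First claim of Theorem 4: if `valid` is monotone and continuous from below and the
family of tests `φ` can be approximated post-hoc, then post-hoc validity of `φ` implies
post-hoc validity of its closure `φ̄`, where `φ̄(α)(x) = d(α)` if `d(α) ≤ e_φ(x)` and `⊥`
otherwise, with `e_φ(x) = ⨆ α, φ(α)(x)`. -/
theorem stmt_8 {X D : Type*} [Nonempty X] [CompleteLinearOrder D]
    (d : Set.Ioo (0 : ℝ) 1 → D) (hd : Antitone d)
    (φ : Set.Ioo (0 : ℝ) 1 → X → D)
    (hφ : ∀ α x, φ α x = ⊥ ∨ φ α x = d α)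
    (valid : (X → D) → Prop)
    (hmono : ∀ f g : X → D, (∀ x, f x ≤ g x) → valid g → valid f)
    (hcont : ∀ f : ℕ → X → D, Monotone f → (∀ n, valid (f n)) →
      valid (fun x => ⨆ n, f n x))
    (happrox : ∃ αs : ℕ → X → Set.Ioo (0 : ℝ) 1,
      Monotone (fun n x => φ (αs n x) x) ∧
      ∀ x, (⨆ n, φ (αs n x) x) = ⨆ α, φ α x)
    (hposthoc : ∀ αt : X → Set.Ioo (0 : ℝ) 1, valid (fun x => φ (αt x) x)) :
    ∀ αt : X → Set.Ioo (0 : ℝ) 1,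
      valid (fun x => if d (αt x) ≤ ⨆ α, φ α x then d (αt x) else ⊥) := by
  intro αt
  obtain ⟨αs, hmon, hsup⟩ := happrox
  have hvalid : valid (fun x => ⨆ α, φ α x) := by
    have := hcont (fun n x => φ (αs n x) x) hmon (fun n => hposthoc (αs n))
    simpa only [hsup] using this
  refine hmono _ _ (fun x => ?_) hvalid
  by_cases h : d (αt x) ≤ ⨆ α, φ α x
  · simpa [h]
  · simp [h]
end

section
/- Suppose 'valid' is monotone and continuous from below, and suppose the family of tests φ can be approximated post-hoc. Then the closure φ̄ is post-hoc valid if and only if its associated E-value e_{φ̄} := ⨆_{α ∈ (0,1)} φ̄(α) is valid. -/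
/-- Second claim of Theorem 4: if `valid` is monotone and continuous from below and the
family of tests `φ` can be approximated post-hoc, then the closure `φ̄` is post-hoc valid
if and only if its associated E-value `e_φ̄ = ⨆ α, φ̄(α)` is valid, where
`φ̄(α)(x) = d(α)` if `d(α) ≤ e_φ(x)` and `⊥` otherwise, with `e_φ(x) = ⨆ α, φ(α)(x)`. -/
theorem stmt_9 {X D : Type*} [Nonempty X] [CompleteLinearOrder D]
    (d : Set.Ioo (0 : ℝ) 1 → D) (hd : Antitone d)
    (φ : Set.Ioo (0 : ℝ) 1 → X → D)
    (hφ : ∀ α x, φ α x = ⊥ ∨ φ α x = d α)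
    (valid : (X → D) → Prop)
    (hmono : ∀ f g : X → D, (∀ x, f x ≤ g x) → valid g → valid f)
    (hcont : ∀ f : ℕ → X → D, Monotone f → (∀ n, valid (f n)) →
      valid (fun x => ⨆ n, f n x))
    (happrox : ∃ αs : ℕ → X → Set.Ioo (0 : ℝ) 1,
      Monotone (fun n x => φ (αs n x) x) ∧
      ∀ x, (⨆ n, φ (αs n x) x) = ⨆ α, φ α x) :
    (∀ αt : X → Set.Ioo (0 : ℝ) 1,
        valid (fun x => if d (αt x) ≤ ⨆ α, φ α x then d (αt x) else ⊥)) ↔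
      valid (fun x => ⨆ α, if d α ≤ ⨆ α', φ α' x then d α else ⊥) := by
  classical
  set e : X → D := fun x => ⨆ α, φ α x with he
  set Φ : Set.Ioo (0:ℝ) 1 → X → D := fun α x => if d α ≤ e x then d α else ⊥ with hΦdef
  have hφΦ : ∀ α x, φ α x ≤ Φ α x := by
    intro α x
    rcases hφ α x with h | h
    · simp [h]
    · have hle : d α ≤ e x := h ▸ le_iSup (fun α => φ α x) α
      simp [Φ, hle, h]
  have hΦe : ∀ α x, Φ α x ≤ e x := by
    intro α x
    by_cases hle : d α ≤ e x <;> simp [Φ, hle]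
  constructor
  · intro H
    obtain ⟨αs, hmonoAs, hsup⟩ := happrox
    have hmax : ∀ n x, ∃ k, k ∈ Finset.range (n+1) ∧
        ∀ j ∈ Finset.range (n+1), Φ (αs j x) x ≤ Φ (αs k x) x := by
      intro n x
      exact Finset.exists_max_image (Finset.range (n+1)) (fun j => Φ (αs j x) x) ⟨0, by simp⟩
    choose K hK1 hK2 using hmax
    set f : ℕ → X → D := fun n x => Φ (αs (K n x) x) x with hf
    have hvalid : ∀ n, valid (f n) := fun n => H (fun x => αs (K n x) x)
    have hfmono : Monotone f := by
      intro m n hmn x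
      have h1 : K m x ∈ Finset.range (n+1) :=
        Finset.mem_range.mpr (lt_of_lt_of_le (Finset.mem_range.mp (hK1 m x)) (by omega))
      exact hK2 n x _ h1
    have hv := hcont f hfmono hvalid
    have heq : (fun x => ⨆ n, f n x) = fun x => ⨆ α, Φ α x := by
      funext x
      apply le_antisymm
      · exact iSup_le fun n => le_iSup (fun α => Φ α x) _
      · have h1 : (⨆ α, Φ α x) ≤ e x := iSup_le fun α => hΦe α x
        have h2 : e x ≤ ⨆ n, f n x := by
          calc e x = ⨆ n, φ (αs n x) x := (hsup x).symm
            _ ≤ ⨆ n, f n x :=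
              iSup_mono fun n => le_trans (hφΦ _ x) (hK2 n x n (by simp))
        exact h1.trans h2
    rw [heq] at hv
    exact hv
  · intro H αt
    exact hmono _ _ (fun x => le_iSup (fun α => Φ α x) (αt x)) H
end

section
/- Suppose 'valid' is continuous from below, and suppose the family of tests φ can be approximated post-hoc. If φ is post-hoc valid, then its E-value e_φ := ⨆_{α ∈ (0,1)} φ(α) is valid. -/
theorem stmt_10_general {X D : Type*} [CompleteLinearOrder D]
    (φ : Set.Ioo (0 : ℝ) 1 → X → D)
    (valid : (X → D) → Prop)
    (hcont : ∀ f : ℕ → X → D, Monotone f → (∀ n, valid (f n)) →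
      valid (fun x => ⨆ n, f n x))
    (happrox : ∃ αs : ℕ → X → Set.Ioo (0 : ℝ) 1,
      Monotone (fun n x => φ (αs n x) x) ∧
      ∀ x, (⨆ n, φ (αs n x) x) = ⨆ α, φ α x)
    (hposthoc : ∀ αt : X → Set.Ioo (0 : ℝ) 1, valid (fun x => φ (αt x) x)) :
    valid (fun x => ⨆ α, φ α x) := by
  obtain ⟨αs, hmono, hsup⟩ := happrox
  simp_rw [← hsup]
  exact hcont _ hmono fun n => hposthoc (αs n)

/-- Intermediate result in the proof of Theorem 4: if `valid` is continuous from below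
and the family of tests `φ` can be approximated post-hoc, then post-hoc validity of `φ`
implies validity of its E-value `e_φ = ⨆ α, φ(α)`. -/
theorem stmt_10 {X D : Type*} [Nonempty X] [CompleteLinearOrder D]
    (d : Set.Ioo (0 : ℝ) 1 → D) (hd : Antitone d)
    (φ : Set.Ioo (0 : ℝ) 1 → X → D)
    (hφ : ∀ α x, φ α x = ⊥ ∨ φ α x = d α)
    (valid : (X → D) → Prop)
    (hcont : ∀ f : ℕ → X → D, Monotone f → (∀ n, valid (f n)) →
      valid (fun x => ⨆ n, f n x))
    (happrox : ∃ αs : ℕ → X → Set.Ioo (0 : ℝ) 1,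
      Monotone (fun n x => φ (αs n x) x) ∧
      ∀ x, (⨆ n, φ (αs n x) x) = ⨆ α, φ α x)
    (hposthoc : ∀ αt : X → Set.Ioo (0 : ℝ) 1, valid (fun x => φ (αt x) x)) :
    valid (fun x => ⨆ α, φ α x) :=
  stmt_10_general φ valid hcont happrox hposthoc
end

section
/- Let P be the uniform (Lebesgue) probability measure on [0,1] and let p : [0,1] → ℝ be the identity. Define the data-dependent level α̃₁(x) := 0.02 if x ≤ 0.01 and α̃₁(x) := 0.01 otherwise, and the constant level α̃₀ ≡ 0.01. Then: (i) the event {x : x ≤ α̃₁(x)} equals {x : x ≤ 0.01}; (ii) the conditional expectation E[1_{p ≤ α̃₁} | σ(α̃₁)] equals the indicator 1_{p ≤ 0.01} almost everywhere; (iii) the essential supremum (with respect to P) of E[1_{p ≤ α̃₁} | σ(α̃₁)] / α̃₁ is at least 50, hence strictly greater than 1; (iv) nevertheless P(p ≤ 0.01)/0.01 = 1 and α̃₀ ≤ α̃₁ pointwise. -/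
/-! The level α̃₁ equals 0.02 exactly on `{x ≤ 0.01}`, so the rejection event `{p ≤ α̃₁}` is that
set, which is σ(α̃₁)-measurable. Its conditional probability given σ(α̃₁) is therefore its own
indicator, and dividing by α̃₁ = 0.02 there gives the value 50 on a set of measure 0.01 > 0. -/

open MeasureTheory

section

variable {α : Type*}

theorem measurableSet_comap_ite {β : Type*} [MeasurableSpace β] [MeasurableSingletonClass β]
    {q : α → Prop} [DecidablePred q] {a b : β} (hab : a ≠ b) :
    MeasurableSet[MeasurableSpace.comap (fun x => if q x then a else b) inferInstance]
      {x | q x} :=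
  ⟨{a}, measurableSet_singleton a, by ext x; by_cases h : q x <;> simp [h, hab.symm]⟩

theorem condExp_indicator_one_of_measurableSet {m m₀ : MeasurableSpace α} {μ : Measure[m₀] α}
    [IsFiniteMeasure μ] (hm : m ≤ m₀) {s : Set α} (hs : MeasurableSet[m] s) :
    μ[s.indicator (fun _ => (1 : ℝ)) | m] = s.indicator fun _ => 1 :=
  condExp_of_stronglyMeasurable hm (stronglyMeasurable_const.indicator hs)
    ((integrable_const 1).indicator (hm s hs))

theorem le_essSup_indicator_const [MeasurableSpace α] {μ : Measure α} {s : Set α}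
    (hs : μ s ≠ 0) (c : ℝ) : c ≤ essSup (s.indicator fun _ => c) μ := by
  have hbdd : Filter.IsBoundedUnder (· ≤ ·) (ae μ) (s.indicator fun _ => c) :=
    Filter.isBoundedUnder_of ⟨max c 0, fun x => by
      by_cases hx : x ∈ s <;> simp [hx]⟩
  refine Filter.le_limsup_of_frequently_le ?_ hbdd
  rw [frequently_ae_iff]
  refine fun h => hs (measure_mono_null (fun x hx => ?_) h)
  simp [hx]

end

theorem Real.volume_restrict_Icc_Iic {a b c : ℝ} (hcb : c ≤ b) :
    volume.restrict (Set.Icc a b) (Set.Iic c) = ENNReal.ofReal (c - a) := by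
  have hinter : Set.Iic c ∩ Set.Icc a b = Set.Icc a c := by
    ext x
    simp only [Set.mem_inter_iff, Set.mem_Iic, Set.mem_Icc]
    constructor
    · rintro ⟨hxc, hax, -⟩; exact ⟨hax, hxc⟩
    · rintro ⟨hax, hxc⟩; exact ⟨hxc, hax, hxc.trans hcb⟩
  rw [Measure.restrict_apply measurableSet_Iic, hinter, Real.volume_Icc]

/-- Example 2 of the paper (ρ = esssup violates monotonicity), concretized on `[0,1]`
with the uniform measure, the identity p-value `p(x) = x`, the constant level
`α̃₀ ≡ 0.01` and the more conservative data-dependent level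
`α̃₁(x) = 0.02` if `x ≤ 0.01` and `0.01` otherwise. -/
theorem stmt_12 (P : Measure ℝ) (hP : P = volume.restrict (Set.Icc (0 : ℝ) 1))
    (p : ℝ → ℝ) (hp : p = id)
    (α₁ : ℝ → ℝ) (hα₁ : α₁ = fun x => if x ≤ (0.01 : ℝ) then (0.02 : ℝ) else (0.01 : ℝ))
    (α₀ : ℝ → ℝ) (hα₀ : α₀ = fun _ => (0.01 : ℝ)) :
    -- (i) the rejection event equals `{x ≤ 0.01}`
    {x : ℝ | p x ≤ α₁ x} = {x : ℝ | x ≤ (0.01 : ℝ)} ∧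
    -- (ii) the conditional rejection probability given `σ(α̃₁)`
    P[({x : ℝ | p x ≤ α₁ x}).indicator (fun _ => (1 : ℝ))
        | MeasurableSpace.comap α₁ inferInstance]
      =ᵐ[P] ({x : ℝ | x ≤ (0.01 : ℝ)}).indicator (fun _ => (1 : ℝ)) ∧
    -- (iii) the essential supremum of the distortion ratio is at least 50, hence > 1
    (50 : ℝ) ≤ essSup (fun x =>
        (P[({x : ℝ | p x ≤ α₁ x}).indicator (fun _ => (1 : ℝ))
          | MeasurableSpace.comap α₁ inferInstance]) x / α₁ x) P ∧
    (1 : ℝ) < essSup (fun x =>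
        (P[({x : ℝ | p x ≤ α₁ x}).indicator (fun _ => (1 : ℝ))
          | MeasurableSpace.comap α₁ inferInstance]) x / α₁ x) P ∧
    -- (iv) the constant level `α̃₀ ≡ 0.01` is valid and `α̃₀ ≤ α̃₁` pointwise
    P {x : ℝ | p x ≤ (0.01 : ℝ)} / ENNReal.ofReal (0.01 : ℝ) = 1 ∧
    ∀ x, α₀ x ≤ α₁ x := by
  subst hP hp
  set S := {x : ℝ | x ≤ (0.01 : ℝ)}
  have hevent : {x : ℝ | id x ≤ α₁ x} = S := by
    ext x; subst hα₁
    by_cases h : x ≤ (0.01 : ℝ)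
    · simpa [S, h] using h.trans (by norm_num)
    · simp [S, h]
  have hS : MeasurableSet[MeasurableSpace.comap α₁ inferInstance] S :=
    hα₁ ▸ measurableSet_comap_ite (q := (· ≤ (0.01 : ℝ))) (by norm_num)
  have hα₁_meas : Measurable α₁ :=
    hα₁ ▸ Measurable.ite measurableSet_Iic measurable_const measurable_const
  have hce := condExp_indicator_one_of_measurableSet
    (μ := volume.restrict (Set.Icc (0 : ℝ) 1)) hα₁_meas.comap_le hS
  have hratio : (fun x => S.indicator (fun _ => (1 : ℝ)) x / α₁ x) = S.indicator fun _ => 50 := by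
    ext x; subst hα₁
    by_cases h : x ≤ (0.01 : ℝ)
    · simp [S, h]; norm_num
    · simp [S, h]
  have hPS : volume.restrict (Set.Icc (0 : ℝ) 1) S = ENNReal.ofReal 0.01 := by
    have h := Real.volume_restrict_Icc_Iic (a := 0) (b := 1) (c := 0.01) (by norm_num)
    rwa [sub_zero] at h
  have h50 : (50 : ℝ) ≤ essSup (S.indicator fun _ => 50) (volume.restrict (Set.Icc (0 : ℝ) 1)) :=
    le_essSup_indicator_const (by rw [hPS]; norm_num) 50
  rw [hevent, hce, hratio]
  refine ⟨rfl, .rfl, h50, by linarith, ?_, fun x => ?_⟩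
  · rw [show {x : ℝ | id x ≤ (0.01 : ℝ)} = S from rfl, hPS,
      ENNReal.div_self (by norm_num) ENNReal.ofReal_ne_top]
  · subst hα₀ hα₁; dsimp only; split_ifs <;> norm_num
end
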